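/- For any p-string w and p-symbol c ∈ Σp, the p-encodings ⟨w⟩ and ⟨cw⟩[2..] differ if and only if c occurs in w; moreover, when c occurs in w, letting h be the leftmost occurrence of c in w, the two strings agree at all positions except h, where ⟨w⟩[h] = ∞ and ⟨cw⟩[h+1] = h. -/

import Mathlib

/-- Symbols of a parameterized string: static symbols `s a` (from Σs) and
parameter symbols `p a` (from Σp). -/
inductive PSym where
  | s : ℕ → PSym
  | p : ℕ → PSym
deriving DecidableEq

/-- Symbols of a p-encoded string: static symbols, finite distances, and ∞. -/
inductive Enc where
  | s : ℕ → Enc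
  | fin : ℕ → Enc
  | inf : Enc
deriving DecidableEq

/-- Order embedding: static symbols < natural numbers < ∞. -/
def Enc.toPair : Enc → ℕ ×ₗ ℕ
  | .s a => toLex (0, a)
  | .fin d => toLex (1, d)
  | .inf => toLex (2, 0)

instance : LinearOrder Enc :=
  LinearOrder.lift' Enc.toPair (by
    rintro (a | a | _) (b | b | _) h <;>
      simp_all [Enc.toPair, toLex_inj, Prod.ext_iff])

/-- Largest position `j < i` (0-based) carrying the same symbol as position `i`. -/
def prevOcc (w : List PSym) (i : ℕ) : Option ℕ :=
  ((List.range i).filter (fun j => w[j]? = w[i]?)).max?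

/-- The p-encoding of position `i` (0-based) of `w`. -/
def pencSym (w : List PSym) (i : ℕ) : Enc :=
  match w[i]? with
  | some (PSym.s a) => Enc.s a
  | some (PSym.p _) =>
    match prevOcc w i with
    | some j => Enc.fin (i - j)
    | none => Enc.inf
  | none => Enc.inf

/-- The p-encoding ⟨w⟩ of a p-string `w`. -/
def penc (w : List PSym) : List Enc :=
  (List.range w.length).map (pencSym w)

/-- Lexicographic (strict) order on p-encoded strings. -/
def lexLt (x y : List Enc) : Prop := List.Lex (· < ·) x y

def lexLe (x y : List Enc) : Prop := lexLt x y ∨ x = y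

/-- Length of the longest common prefix. -/
def lcp {α : Type*} [DecidableEq α] : List α → List α → ℕ
  | a :: x, b :: y => if a = b then lcp x y + 1 else 0
  | _, _ => 0

/-- Number of ∞'s in the longest common prefix of two p-encoded strings. -/
def lcpInf (x y : List Enc) : ℕ := (x.take (lcp x y)).count Enc.inf

/-- Number of distinct p-symbols occurring in `w` (denoted |w|_p). -/
def distinctP (w : List PSym) : ℕ :=
  (w.filterMap (fun s => match s with | PSym.p a => some a | PSym.s _ => none)).dedup.length

/-- For `w` starting with a p-symbol: the rank of `w[1]` among the distinct
p-symbols of `w[1..h+1]`, where `h+1 = min{|w|, second occurrence of w[1] in w}`. -/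
def fceRank (w : List PSym) : ℕ :=
  match w with
  | [] => 0
  | c :: rest => distinctP ((c :: rest).take (min (c :: rest).length (2 + rest.idxOf c)))

/-- The function fce from the paper; `fce ε = $` is modelled as `Enc.s 0`. -/
def fce (w : List PSym) : Enc :=
  match w with
  | [] => Enc.s 0
  | PSym.s a :: _ => Enc.s a
  | w => Enc.fin (fceRank w)

/-!
Prepending `c` shifts every position of `w`, and with it every pointer to a previous
occurrence, by one, so all distances survive. The only new pointer goes from the leftmost
occurrence of `c` in `w` back to the prepended `c`, turning its `∞` into the distance `h`.
-/

lemma List.max?_map_succ (l : List ℕ) : (l.map Nat.succ).max? = l.max?.map Nat.succ := by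
  induction l with
  | nil => rfl
  | cons a l ih =>
    simp only [List.map_cons, List.max?_cons, ih]
    cases l.max? <;> simp [Nat.succ_max_succ]

lemma prevOcc_cons_succ (c : PSym) (w : List PSym) (i : ℕ) :
    prevOcc (c :: w) (i + 1) =
      if w[i]? = some c then some ((prevOcc w i).elim 0 Nat.succ)
      else (prevOcc w i).map Nat.succ := by
  have hfilter : ((List.range i).map Nat.succ).filter
      (fun j => decide ((c :: w)[j]? = w[i]?)) =
      ((List.range i).filter (fun j => decide (w[j]? = w[i]?))).map Nat.succ := by
    rw [List.filter_map]
    rfl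
  unfold prevOcc
  simp only [List.range_succ_eq_map, List.filter_cons, List.getElem?_cons_succ,
    List.getElem?_cons_zero, hfilter, decide_eq_true_eq, eq_comm (a := some c)]
  split_ifs
  · rw [List.max?_cons, List.max?_map_succ]
    cases ((List.range i).filter fun j => decide (w[j]? = w[i]?)).max? <;> simp
  · exact List.max?_map_succ _

lemma prevOcc_eq_none_iff {w : List PSym} {i : ℕ} {x : PSym} (hx : w[i]? = some x) :
    prevOcc w i = none ↔ w.idxOf x = i := by
  obtain ⟨hi, rfl⟩ := List.getElem?_eq_some_iff.1 hx
  rw [prevOcc, List.max?_eq_none_iff, List.filter_eq_nil_iff, List.idxOf, List.findIdx_eq hi]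
  simp only [List.mem_range, hx, decide_eq_true_eq, beq_self_eq_true, true_and, beq_eq_false_iff_ne]
  refine forall₂_congr fun j hj => ?_
  simp [List.getElem?_eq_getElem (hj.trans hi)]

lemma pencSym_idxOf {w : List PSym} {a : ℕ} (h : PSym.p a ∈ w) :
    pencSym w (w.idxOf (PSym.p a)) = Enc.inf := by
  have hx := List.getElem?_idxOf h
  rw [pencSym, hx, (prevOcc_eq_none_iff hx).2 rfl]

lemma pencSym_cons_succ (a : ℕ) {w : List PSym} {i : ℕ} (hi : i < w.length) :
    pencSym (PSym.p a :: w) (i + 1) =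
      if w.idxOf (PSym.p a) = i then Enc.fin (i + 1) else pencSym w i := by
  unfold pencSym
  rw [List.getElem?_cons_succ, prevOcc_cons_succ]
  by_cases hc : w[i]? = some (PSym.p a)
  · have hnone := prevOcc_eq_none_iff hc
    split_ifs with hfirst
    · simp [hc, hnone.2 hfirst]
    · obtain ⟨j, hj⟩ := Option.ne_none_iff_exists'.1 (mt hnone.1 hfirst)
      simp [hc, hj]
  · have hfirst : w.idxOf (PSym.p a) ≠ i := by
      rintro rfl
      exact hc (List.getElem?_idxOf (List.idxOf_lt_length_iff.1 hi))
    rw [if_neg hc, if_neg hfirst]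
    rcases w[i]? with _ | _ | _ <;> rcases prevOcc w i with _ | _ <;> simp

lemma getElem?_penc {w : List PSym} {i : ℕ} (hi : i < w.length) :
    (penc w)[i]? = some (pencSym w i) := by
  simp [penc, hi]

lemma getElem?_drop_one_penc_cons (a : ℕ) (w : List PSym) (i : ℕ) :
    ((penc (PSym.p a :: w)).drop 1)[i]? =
      if PSym.p a ∈ w ∧ w.idxOf (PSym.p a) = i then some (Enc.fin (i + 1))
      else (penc w)[i]? := by
  rw [List.getElem?_drop, Nat.add_comm]
  by_cases hi : i < w.length
  · have hmem : PSym.p a ∈ w ∧ w.idxOf (PSym.p a) = i ↔ w.idxOf (PSym.p a) = i :=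
      and_iff_right_of_imp fun h => List.idxOf_lt_length_iff.1 (h ▸ hi)
    rw [getElem?_penc (Nat.succ_lt_succ hi), pencSym_cons_succ a hi, getElem?_penc hi]
    simp only [hmem]
    split_ifs <;> rfl
  · have hout : w.length ≤ i := not_lt.1 hi
    rw [if_neg fun ⟨hm, hidx⟩ => hi (hidx ▸ List.idxOf_lt_length_of_mem hm),
      List.getElem?_eq_none (by simpa [penc] using hout),
      List.getElem?_eq_none (by simpa [penc] using hout)]

-- Positions are 0-based: the paper's leftmost occurrence `h` of `c` is `w.idxOf (PSym.p a) + 1`.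
/-- ⟨w⟩ and ⟨cw⟩[2..] differ iff the p-symbol `c` occurs in `w`; when it does,
they agree everywhere except at the leftmost occurrence `h` of `c` in `w`
(0-based index `h₀ = h − 1`), where ⟨w⟩[h] = ∞ and ⟨cw⟩[h+1] = h. -/
theorem stmt1 (w : List PSym) (a : ℕ) :
    (penc w ≠ (penc (PSym.p a :: w)).drop 1 ↔ PSym.p a ∈ w) ∧
    (PSym.p a ∈ w →
      (∀ i, i ≠ w.idxOf (PSym.p a) →
        (penc w)[i]? = ((penc (PSym.p a :: w)).drop 1)[i]?) ∧
      (penc w)[w.idxOf (PSym.p a)]? = some Enc.inf ∧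
      ((penc (PSym.p a :: w)).drop 1)[w.idxOf (PSym.p a)]? =
        some (Enc.fin (w.idxOf (PSym.p a) + 1))) := by
  have hdrop := getElem?_drop_one_penc_cons a w
  have hfirst (hm : PSym.p a ∈ w) : (penc w)[w.idxOf (PSym.p a)]? = some Enc.inf := by
    rw [getElem?_penc (List.idxOf_lt_length_of_mem hm), pencSym_idxOf hm]
  refine ⟨⟨fun hne => ?_, fun hm heq => ?_⟩, fun hm => ⟨fun i hi => ?_, hfirst hm, ?_⟩⟩
  · by_contra hm
    exact hne (List.ext_getElem? fun i => by rw [hdrop, if_neg fun h => hm h.1])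
  · have h := hdrop (w.idxOf (PSym.p a))
    rw [← heq, hfirst hm, if_pos ⟨hm, rfl⟩] at h
    simp at h
  · rw [hdrop, if_neg fun h => hi h.2.symm]
  · rw [hdrop, if_pos ⟨hm, rfl⟩]
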